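/- arXiv:2304.12381 — 9 statements merged into one kernel-verified Lean document; each statement's English description precedes it below -/
import Mathlib

section
/- Two simple graphs G and H on a common finite vertex set V satisfy d_G(v) = d_H(v) for all v ∈ V if and only if H can be obtained from G by a finite sequence of 2-switches. -/
/-!
Colour the edges of `G \ H` red and those of `H \ G` blue; if `G` and `H` have the same degrees,
each vertex has equally many red and blue edges. Then some red–blue–red path `a b c d` with
`a ≠ d` has `ad` not red. Otherwise take `c` of maximum red degree: each red neighbour `a` of a
blue neighbour `b` of `c` has `N_R(a) ⊇ (N_R(c) \ {a}) ∪ {b}`, so by maximality `a ∈ N_R(c)`,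
`a` also has maximum red degree, and `b` is determined by `a`; counting then shows that every red
neighbour of a vertex of maximum red degree arises in this way. Applied at `c` and then at `a`,
this yields an edge that is both red and blue.

For such a path, the 2-switch `ab, cd ↦ bc, ad` in `G` (if `ad ∉ G`) or `bc, ad ↦ ab, cd` in `H`
(if `ad ∈ G ∩ H`) lowers `|E(G) \ E(H)|`. As 2-switches preserve degrees and are reversible,
induction on `|E(G) \ E(H)|` proves the theorem.
-/

open scoped Classical

/-- `TwoSwitch G H` holds when `H` is obtained from `G` by a single 2-switch: edges
`{u,v}, {w,x}` on four distinct vertices (with `{u,w}, {v,x}` non-edges) are replaced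
by the edges `{u,w}, {v,x}`. -/
def TwoSwitch {V : Type*} (G H : SimpleGraph V) : Prop :=
  ∃ u v w x : V, u ≠ v ∧ u ≠ w ∧ u ≠ x ∧ v ≠ w ∧ v ≠ x ∧ w ≠ x ∧
    G.Adj u v ∧ G.Adj w x ∧ ¬ G.Adj u w ∧ ¬ G.Adj v x ∧
    H = SimpleGraph.fromEdgeSet ((G.edgeSet \ {s(u, v), s(w, x)}) ∪ {s(u, w), s(v, x)})

open SimpleGraph Finset

section Switching

variable {V : Type*}

lemma Set.ite_mem_sdiff_pair_union_pair {α : Type*} {E : Set α} {e₁ e₂ f₁ f₂ : α}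
    (he₁ : e₁ ∈ E) (he₂ : e₂ ∈ E) (hf₁ : f₁ ∉ E) (hf₂ : f₂ ∉ E) (he : e₁ ≠ e₂) (hf : f₁ ≠ f₂)
    (e : α) :
    (if e ∈ (E \ {e₁, e₂}) ∪ {f₁, f₂} then 1 else 0) + (if e = e₁ then 1 else 0) +
        (if e = e₂ then 1 else 0) =
      (if e ∈ E then 1 else 0) + (if e = f₁ then 1 else 0) + (if e = f₂ then 1 else 0) := by
  by_cases h₁ : e = e₁ <;> by_cases h₂ : e = e₂ <;> by_cases h₃ : e = f₁ <;>
    by_cases h₄ : e = f₂ <;> simp_all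

lemma Set.sdiff_pair_union_pair_cancel {α : Type*} {E : Set α} {e₁ e₂ f₁ f₂ : α}
    (he₁ : e₁ ∈ E) (he₂ : e₂ ∈ E) (hf₁ : f₁ ∉ E) (hf₂ : f₂ ∉ E) :
    ((E \ {e₁, e₂}) ∪ {f₁, f₂}) \ {f₁, f₂} ∪ {e₁, e₂} = E := by
  ext e
  by_cases h₁ : e = e₁ <;> by_cases h₂ : e = e₂ <;> by_cases h₃ : e = f₁ <;>
    by_cases h₄ : e = f₂ <;> simp_all

lemma Set.ncard_lt_of_subset_insert_sdiff_pair {α : Type*} [Finite α] {D S : Set α} {p q r : α}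
    (hp : p ∈ D) (hq : q ∈ D) (hpq : p ≠ q) (hS : S ⊆ insert r (D \ {p, q})) :
    S.ncard < D.ncard := by
  have hsub : {p, q} ⊆ D := Set.pair_subset hp hq
  have h2 : 2 ≤ D.ncard := Set.ncard_pair hpq ▸ Set.ncard_le_ncard hsub
  calc S.ncard ≤ (insert r (D \ {p, q})).ncard := Set.ncard_le_ncard hS
    _ ≤ (D \ {p, q}).ncard + 1 := Set.ncard_insert_le _ _
    _ < D.ncard := by rw [Set.ncard_sdiff hsub, Set.ncard_pair hpq]; omega

lemma Sym2.card_filter_mk_eq_mk [Fintype V] (z : V) {p q : V} (hpq : p ≠ q) :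
    #{y | s(z, y) = s(p, q)} = (if z = p then 1 else 0) + (if z = q then 1 else 0) := by
  by_cases hzp : z = p
  · subst hzp
    simp [hpq, card_eq_one, Finset.ext_iff]
  · by_cases hzq : z = q
    · subst hzq
      simp [hzp, card_eq_one, Finset.ext_iff]
    · simp [hzp, hzq]

lemma SimpleGraph.edgeSet_fromEdgeSet_switch (G : SimpleGraph V) {u v w x : V} (huw : u ≠ w)
    (hvx : v ≠ x) :
    (fromEdgeSet ((G.edgeSet \ {s(u, v), s(w, x)}) ∪ {s(u, w), s(v, x)})).edgeSet =
      (G.edgeSet \ {s(u, v), s(w, x)}) ∪ {s(u, w), s(v, x)} := by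
  rw [edgeSet_fromEdgeSet, sdiff_eq_left, Set.disjoint_left]
  rintro e (⟨he, -⟩ | rfl | rfl) hd
  · exact G.not_isDiag_of_mem_edgeSet he hd
  · exact huw (Sym2.mk_isDiag_iff.mp hd)
  · exact hvx (Sym2.mk_isDiag_iff.mp hd)

lemma SimpleGraph.degree_sdiff_comm [Fintype V] {G H : SimpleGraph V} [DecidableRel G.Adj]
    [DecidableRel H.Adj] (hdeg : ∀ v, G.degree v = H.degree v) (v : V) :
    (G \ H).degree v = (H \ G).degree v := by
  simp only [← card_neighborFinset_eq_degree, neighborFinset_sdiff]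
  exact card_sdiff_comm (by simpa only [card_neighborFinset_eq_degree] using hdeg v)

lemma SimpleGraph.sdiff_ne_bot_of_degree_eq [Fintype V] {G H : SimpleGraph V}
    [DecidableRel G.Adj] [DecidableRel H.Adj] (hdeg : ∀ v, G.degree v = H.degree v)
    (hne : G ≠ H) : G \ H ≠ ⊥ := by
  intro hbot
  refine hne (le_antisymm (sdiff_eq_bot_iff.mp hbot) (sdiff_eq_bot_iff.mp ?_))
  refine eq_bot_iff.mpr fun x y hxy => ?_
  obtain ⟨z, hz⟩ := ((G \ H).degree_pos_iff_exists_adj x).mp <|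
    (degree_sdiff_comm hdeg x).symm ▸ ((H \ G).degree_pos_iff_exists_adj x).mpr ⟨y, hxy⟩
  rw [hbot] at hz
  exact hz.elim

namespace TwoSwitch

variable {G H : SimpleGraph V}

theorem degree_eq [Fintype V] [DecidableRel G.Adj] [DecidableRel H.Adj] (h : TwoSwitch G H)
    (z : V) : G.degree z = H.degree z := by
  obtain ⟨u, v, w, x, huv, huw, hux, hvw, hvx, hwx, hGuv, hGwx, hGuw, hGvx, hH⟩ := h
  have hHE : H.edgeSet = (G.edgeSet \ {s(u, v), s(w, x)}) ∪ {s(u, w), s(v, x)} := by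
    rw [hH, edgeSet_fromEdgeSet_switch G huw hvx]
  have hexch := Set.ite_mem_sdiff_pair_union_pair (E := G.edgeSet) (e₁ := s(u, v))
    (e₂ := s(w, x)) (f₁ := s(u, w)) (f₂ := s(v, x)) hGuv hGwx hGuw hGvx
    (by grind [Sym2.eq_iff]) (by grind [Sym2.eq_iff])
  have hcount : H.degree z + #{y | s(z, y) = s(u, v)} + #{y | s(z, y) = s(w, x)} =
      G.degree z + #{y | s(z, y) = s(u, w)} + #{y | s(z, y) = s(v, x)} := by
    simp only [← card_neighborFinset_eq_degree, neighborFinset_eq_filter, card_filter,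
      ← sum_add_distrib, ← mem_edgeSet, hHE]
    exact sum_congr rfl fun y _ => by convert hexch s(z, y)
  rw [Sym2.card_filter_mk_eq_mk z huv, Sym2.card_filter_mk_eq_mk z huw,
    Sym2.card_filter_mk_eq_mk z hvx, Sym2.card_filter_mk_eq_mk z hwx] at hcount
  omega

theorem symm (h : TwoSwitch G H) : TwoSwitch H G := by
  obtain ⟨u, v, w, x, huv, huw, hux, hvw, hvx, hwx, hGuv, hGwx, hGuw, hGvx, rfl⟩ := h
  have hE := edgeSet_fromEdgeSet_switch G huw hvx
  refine ⟨u, w, v, x, huw, huv, hux, hvw.symm, hwx, hvx, ?_, ?_, ?_, ?_, ?_⟩ <;>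
    simp only [← mem_edgeSet, hE]
  · simp
  · simp
  · grind [Sym2.eq_iff]
  · grind [Sym2.eq_iff]
  · rw [Set.sdiff_pair_union_pair_cancel (E := G.edgeSet) hGuv hGwx hGuw hGvx, fromEdgeSet_edgeSet]

end TwoSwitch

section AlternatingPath

variable [Fintype V] [DecidableEq V] {R B : SimpleGraph V} [DecidableRel R.Adj]
  [DecidableRel B.Adj] (hclosed : ∀ a b c d, R.Adj a b → B.Adj b c → R.Adj c d → a ≠ d → R.Adj a d)
include hclosed

lemma card_erase_add_card_inter_le (hdisj : Disjoint R B) {a b c : V} (hab : R.Adj a b)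
    (hbc : B.Adj b c) :
    #((R.neighborFinset c).erase a) + #(B.neighborFinset c ∩ R.neighborFinset a) ≤ R.degree a := by
  rw [← card_union_of_disjoint, ← card_neighborFinset_eq_degree]
  · refine card_le_card (union_subset (fun d hd => ?_) inter_subset_right)
    rw [mem_erase, mem_neighborFinset] at hd
    exact (R.mem_neighborFinset a d).mpr (hclosed a b c d hab hbc hd.2 (Ne.symm hd.1))
  · refine disjoint_left.mpr fun d hd hd' => ?_
    simp only [mem_erase, mem_inter, mem_neighborFinset] at hd hd'
    exact SimpleGraph.disjoint_left.mp hdisj c d hd.2 hd'.1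

lemma adj_and_degree_eq_maxDegree_and_unique (hdisj : Disjoint R B) {a b c : V}
    (hc : R.degree c = R.maxDegree) (hcb : B.Adj c b) (hab : R.Adj a b) :
    R.Adj c a ∧ R.degree a = R.maxDegree ∧ ∀ b', B.Adj c b' → R.Adj a b' → b' = b := by
  have hle := card_erase_add_card_inter_le hclosed hdisj hab hcb.symm
  have hmax := R.degree_le_maxDegree a
  have hb : b ∈ B.neighborFinset c ∩ R.neighborFinset a := by simp [hcb, hab]
  have hpos := card_pos.mpr ⟨b, hb⟩
  by_cases hca : R.Adj c a
  · rw [card_erase_of_mem ((R.mem_neighborFinset c a).mpr hca), card_neighborFinset_eq_degree]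
      at hle
    have hcpos : 0 < R.degree c := (R.degree_pos_iff_exists_adj c).mpr ⟨a, hca⟩
    refine ⟨hca, by omega, fun b' hcb' hab' => by_contra fun hne => ?_⟩
    have : 1 < #(B.neighborFinset c ∩ R.neighborFinset a) :=
      one_lt_card.mpr ⟨b, hb, b', by simp [hcb', hab'], Ne.symm hne⟩
    omega
  · rw [erase_eq_of_notMem (by simpa using hca), card_neighborFinset_eq_degree] at hle
    omega

lemma exists_adj_adj_of_degree_eq_maxDegree (hdisj : Disjoint R B)
    (hdeg : ∀ v, R.degree v = B.degree v) {a : V} (ha : R.degree a = R.maxDegree) {y : V}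
    (hay : R.Adj a y) : ∃ b, B.Adj a b ∧ R.Adj b y := by
  have hred : ∀ b ∈ B.neighborFinset a, ∃ y, R.Adj b y := fun b hb =>
    (R.degree_pos_iff_exists_adj b).mp <| by
      rw [hdeg]
      exact (B.degree_pos_iff_exists_adj b).mpr ⟨a, ((B.mem_neighborFinset a b).mp hb).symm⟩
  choose f hf using hred
  have hmaps : ∀ b hb, f b hb ∈ R.neighborFinset a := fun b hb =>
    (R.mem_neighborFinset a _).mpr (adj_and_degree_eq_maxDegree_and_unique hclosed hdisj ha
      ((B.mem_neighborFinset a b).mp hb) (hf b hb).symm).1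
  have hinj : ∀ b₁ b₂ hb₁ hb₂, f b₁ hb₁ = f b₂ hb₂ → b₁ = b₂ := fun b₁ b₂ hb₁ hb₂ heq =>
    (adj_and_degree_eq_maxDegree_and_unique hclosed hdisj ha ((B.mem_neighborFinset a b₂).mp hb₂)
      (hf b₂ hb₂).symm).2.2 b₁ ((B.mem_neighborFinset a b₁).mp hb₁) (heq ▸ hf b₁ hb₁).symm
  have hcard : #(R.neighborFinset a) ≤ #(B.neighborFinset a) := by
    rw [card_neighborFinset_eq_degree, card_neighborFinset_eq_degree, hdeg]
  obtain ⟨b, hb, rfl⟩ := surj_on_of_inj_on_of_card_le f hmaps hinj hcard y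
    ((R.mem_neighborFinset a y).mpr hay)
  exact ⟨b, (B.mem_neighborFinset a b).mp hb, hf b hb⟩

end AlternatingPath

theorem exists_alternating_path_not_adj [Fintype V] {R B : SimpleGraph V} [DecidableRel R.Adj]
    [DecidableRel B.Adj] (hdisj : Disjoint R B) (hdeg : ∀ v, R.degree v = B.degree v)
    (hR : R ≠ ⊥) : ∃ a b c d, R.Adj a b ∧ B.Adj b c ∧ R.Adj c d ∧ a ≠ d ∧ ¬R.Adj a d := by
  by_contra! hclosed
  obtain ⟨p, q, hpq⟩ := ne_bot_iff_exists_adj.mp hR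
  have : Nonempty V := ⟨p⟩
  obtain ⟨c, hc⟩ := R.exists_maximal_degree_vertex
  have hcpos : 0 < B.degree c := by
    rw [← hdeg, ← hc]
    exact lt_of_lt_of_le ((R.degree_pos_iff_exists_adj p).mpr ⟨q, hpq⟩) (R.degree_le_maxDegree p)
  obtain ⟨b, hcb⟩ := (B.degree_pos_iff_exists_adj c).mp hcpos
  obtain ⟨a, hba⟩ := (R.degree_pos_iff_exists_adj b).mp <| by
    rw [hdeg]
    exact (B.degree_pos_iff_exists_adj b).mpr ⟨c, hcb.symm⟩
  obtain ⟨-, ha, -⟩ := adj_and_degree_eq_maxDegree_and_unique hclosed hdisj hc.symm hcb hba.symm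
  obtain ⟨b', hab', hb'b⟩ := exists_adj_adj_of_degree_eq_maxDegree hclosed hdisj hdeg ha hba.symm
  have hcb' := (adj_and_degree_eq_maxDegree_and_unique hclosed hdisj hc.symm hcb hb'b).1
  exact SimpleGraph.disjoint_left.mp hdisj a b'
    (hclosed a b c b' hba.symm hcb.symm hcb' hab'.ne) hab'

theorem exists_twoSwitch_ncard_sdiff_lt [Fintype V] {G H : SimpleGraph V} [DecidableRel G.Adj]
    [DecidableRel H.Adj] (hdeg : ∀ v, G.degree v = H.degree v) (hne : G ≠ H) :
    (∃ G', TwoSwitch G G' ∧ (G'.edgeSet \ H.edgeSet).ncard < (G.edgeSet \ H.edgeSet).ncard) ∨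
      (∃ H', TwoSwitch H H' ∧ (G.edgeSet \ H'.edgeSet).ncard < (G.edgeSet \ H.edgeSet).ncard) := by
  obtain ⟨a, b, c, d, hab, hbc, hcd, had, hnad⟩ :=
    exists_alternating_path_not_adj disjoint_sdiff_sdiff (degree_sdiff_comm hdeg)
      (sdiff_ne_bot_of_degree_eq hdeg hne)
  simp only [sdiff_adj] at hab hbc hcd hnad
  have hac : a ≠ c := by rintro rfl; exact hab.2 hbc.1.symm
  have hbd : b ≠ d := by rintro rfl; exact hbc.2 hcd.1.symm
  have hpq : s(a, b) ≠ s(c, d) := by simp [hac, hbd, hbc.1.ne]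
  by_cases hGad : G.Adj a d
  · have hHad : H.Adj a d := by_contra fun h => hnad ⟨hGad, h⟩
    refine .inr ⟨_, ⟨b, c, a, d, hbc.1.ne, hab.1.ne.symm, hbd, hac.symm, hcd.1.ne, had, hbc.1,
      hHad, fun h => hab.2 h.symm, hcd.2, rfl⟩, ?_⟩
    refine Set.ncard_lt_of_subset_insert_sdiff_pair (r := s(a, d)) hab hcd hpq ?_
    rw [edgeSet_fromEdgeSet_switch H hab.1.ne.symm hcd.1.ne]
    rintro e ⟨heG, he⟩
    rcases eq_or_ne e s(b, c) with rfl | hbc'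
    · exact absurd heG hbc.2
    rw [Sym2.eq_swap (a := b) (b := a)] at he
    simp only [Set.mem_union, Set.mem_sdiff, Set.mem_insert_iff, Set.mem_singleton_iff, not_or,
      hbc', false_or, not_and_not_right] at he ⊢
    tauto
  · refine .inl ⟨_, ⟨b, a, c, d, hab.1.ne.symm, hbc.1.ne, hbd, hac, had, hcd.1.ne, hab.1.symm,
      hcd.1, hbc.2, hGad, rfl⟩, ?_⟩
    refine Set.ncard_lt_of_subset_insert_sdiff_pair (r := s(a, d)) hab hcd hpq ?_
    rw [edgeSet_fromEdgeSet_switch G hbc.1.ne had]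
    rintro e ⟨he, heH⟩
    rcases eq_or_ne e s(b, c) with rfl | hbc'
    · exact absurd hbc.1 heH
    rw [Sym2.eq_swap (a := b) (b := a)] at he
    simp only [Set.mem_union, Set.mem_sdiff, Set.mem_insert_iff, Set.mem_singleton_iff,
      hbc', false_or] at he ⊢
    tauto

end Switching

/-- **Berge's theorem.**  Two graphs `G` and `H` on a common finite vertex set have the
same degree at every vertex iff `H` can be obtained from `G` by a finite (possibly
empty) sequence of 2-switches. -/
theorem berge_two_switch {V : Type*} [Fintype V] (G H : SimpleGraph V) :
    (∀ v : V, G.degree v = H.degree v) ↔ Relation.ReflTransGen TwoSwitch G H := by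
  refine ⟨fun hdeg => ?_, fun h v => ?_⟩
  · induction hn : (G.edgeSet \ H.edgeSet).ncard using Nat.strong_induction_on
      generalizing G H with | _ n ih =>
    by_cases hGH : G = H
    · exact hGH ▸ .refl
    rcases exists_twoSwitch_ncard_sdiff_lt hdeg hGH with ⟨G', hG', hlt⟩ | ⟨H', hH', hlt⟩
    · exact .head hG' (ih _ (hn ▸ hlt) G' H (fun v => (hG'.degree_eq v).symm.trans (hdeg v)) rfl)
    · exact .tail (ih _ (hn ▸ hlt) G H' (fun v => (hdeg v).trans (hH'.degree_eq v)) rfl) hH'.symm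
  · induction h with
    | refl => rfl
    | tail _ hstep ih => exact ih.trans (hstep.degree_eq v)
end

section
/- Let G be a simple graph on n vertices with degree sequence d_1 ≥ d_2 ≥ … ≥ d_n (n−1 ≥ d_1, d_n ≥ 0), and let m be the largest index i such that d_i ≥ i−1 (the split index). Then G is a split graph if and only if Σ_{i=1}^{m} d_i = m(m−1) + Σ_{i=m+1}^{n} d_i. -/
open scoped Classical
open Finset

section Aux

variable {V : Type*} [Fintype V] [DecidableEq V] (G : SimpleGraph V) [DecidableRel G.Adj]

lemma HS_inter_filter (t : Finset V) (v : V) :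
    G.neighborFinset v ∩ t = t.filter (fun u => G.Adj v u) := by
  ext u; simp [SimpleGraph.mem_neighborFinset, and_comm]

lemma HS_cross_sum (A B : Finset V) :
    ∑ v ∈ A, (G.neighborFinset v ∩ B).card = ∑ u ∈ B, (G.neighborFinset u ∩ A).card := by
  simp only [HS_inter_filter, Finset.card_filter]
  rw [Finset.sum_comm]
  refine Finset.sum_congr rfl fun u _ => Finset.sum_congr rfl fun v _ => ?_
  simp [G.adj_comm]

lemma HS_deg_split (A : Finset V) (v : V) :
    G.degree v = (G.neighborFinset v ∩ A).card + (G.neighborFinset v ∩ Aᶜ).card := by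
  have h : G.neighborFinset v ∩ Aᶜ = G.neighborFinset v \ A := by
    ext u; simp [Finset.mem_compl, Finset.mem_sdiff, and_comm]
  rw [← SimpleGraph.card_neighborFinset_eq_degree, h]
  exact (Finset.card_inter_add_card_sdiff _ _).symm

lemma HS_sum_deg (A : Finset V) :
    ∑ v ∈ A, G.degree v =
      (∑ v ∈ A, (G.neighborFinset v ∩ A).card) + ∑ v ∈ A, (G.neighborFinset v ∩ Aᶜ).card := by
  rw [← Finset.sum_add_distrib]
  exact Finset.sum_congr rfl fun v _ => HS_deg_split G A v

end Aux

lemma HS_card_filter_lt (n m : ℕ) (h : m ≤ n) :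
    ((Finset.univ : Finset (Fin n)).filter (fun i : Fin n => (i : ℕ) < m)).card = m := by
  have he : (Finset.univ : Finset (Fin n)).filter (fun i : Fin n => (i : ℕ) < m)
      = (Finset.range m).attachFin (fun x hx => lt_of_lt_of_le (Finset.mem_range.mp hx) h) := by
    ext a
    simp [Finset.mem_attachFin, Finset.mem_range]
  rw [he, Finset.card_attachFin, Finset.card_range]

lemma HS_sum_exchange {α : Type*} [DecidableEq α] (f : α → ℕ) (c : ℕ) (X Y : Finset α)
    (hcard : X.card = Y.card) (hX : ∀ v ∈ X, v ∉ Y → f v = c)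
    (hY : ∀ v ∈ Y, v ∉ X → f v = c) : ∑ v ∈ X, f v = ∑ v ∈ Y, f v := by
  have h1 : ∑ v ∈ X ∩ Y, f v + ∑ v ∈ X \ Y, f v = ∑ v ∈ X, f v :=
    Finset.sum_inter_add_sum_sdiff X Y f
  have h2 : ∑ v ∈ Y ∩ X, f v + ∑ v ∈ Y \ X, f v = ∑ v ∈ Y, f v :=
    Finset.sum_inter_add_sum_sdiff Y X f
  have h3 : ∑ v ∈ X \ Y, f v = (X \ Y).card * c := by
    rw [Finset.sum_congr rfl (fun v hv => hX v (Finset.mem_sdiff.mp hv).1 (Finset.mem_sdiff.mp hv).2)]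
    simp [mul_comm]
  have h4 : ∑ v ∈ Y \ X, f v = (Y \ X).card * c := by
    rw [Finset.sum_congr rfl (fun v hv => hY v (Finset.mem_sdiff.mp hv).1 (Finset.mem_sdiff.mp hv).2)]
    simp [mul_comm]
  have h5 := Finset.card_inter_add_card_sdiff X Y
  have h6 := Finset.card_inter_add_card_sdiff Y X
  rw [Finset.inter_comm Y X] at h2 h6
  have h7 : (X \ Y).card = (Y \ X).card := by omega
  have h8 : (X \ Y).card * c = (Y \ X).card * c := by rw [h7]
  omega


/-- A graph is a split graph if its vertex set can be partitioned into a set `K`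
inducing a complete graph and an independent set `I`. -/
def IsSplit {V : Type*} (G : SimpleGraph V) : Prop :=
  ∃ K I : Set V, K ∪ I = Set.univ ∧ Disjoint K I ∧ G.IsClique K ∧
    ∀ a ∈ I, ∀ b ∈ I, ¬ G.Adj a b

/-- **Hammer–Simeone characterization of split graphs.**  Let `G` be a graph on `Fin n`
whose degree sequence `d₁ ≥ … ≥ dₙ` is nonincreasing (`d i` is the degree of vertex `i`),
and let `m` (`1 ≤ m ≤ n`) be the largest (1-based) index with `dₘ ≥ m - 1`, i.e.
`d ⟨m-1⟩ ≥ m - 1` and `d j < j` for every 0-based index `j ≥ m`.  Then `G` is split iff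
`∑_{i=1}^{m} dᵢ = m(m-1) + ∑_{i=m+1}^{n} dᵢ`. -/
theorem hammer_simeone {n : ℕ} (G : SimpleGraph (Fin n)) (d : Fin n → ℕ)
    (hd : Antitone d) (hdeg : ∀ i, G.degree i = d i)
    (m : ℕ) (hm1 : 1 ≤ m) (hm2 : m ≤ n)
    (hsplit : m - 1 ≤ d ⟨m - 1, by omega⟩)
    (hmax : ∀ j : Fin n, m ≤ (j : ℕ) → d j < (j : ℕ)) :
    IsSplit G ↔
      ∑ i ∈ Finset.univ.filter (fun i : Fin n => (i : ℕ) < m), d i =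
        m * (m - 1) + ∑ i ∈ Finset.univ.filter (fun i : Fin n => m ≤ (i : ℕ)), d i := by
  set A : Finset (Fin n) := Finset.univ.filter (fun i : Fin n => (i : ℕ) < m) with hA
  have hBA : Finset.univ.filter (fun i : Fin n => m ≤ (i : ℕ)) = Aᶜ := by
    ext i
    simp [hA, not_lt]
  have hAcard : A.card = m := HS_card_filter_lt n m hm2
  rw [hBA]
  constructor
  · -- forward direction
    rintro ⟨K₀, I₀, hunion, hdisj, hclique, hindep⟩
    have hmemI : ∀ a : Fin n, a ∉ K₀ → a ∈ I₀ := by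
      intro a ha
      have : a ∈ K₀ ∪ I₀ := by rw [hunion]; exact Set.mem_univ a
      rcases this with h | h
      · exact absurd h ha
      · exact h
    set S : Finset (Finset (Fin n)) :=
      Finset.univ.filter (fun K => G.IsClique (↑K : Set (Fin n)) ∧
        ∀ a ∉ K, ∀ b ∉ K, ¬ G.Adj a b) with hS
    have hS0 : S.Nonempty := by
      refine ⟨K₀.toFinset, ?_⟩
      rw [hS, Finset.mem_filter]
      refine ⟨Finset.mem_univ _, by simpa using hclique, ?_⟩
      intro a ha b hb
      rw [Set.mem_toFinset] at ha hb
      exact hindep a (hmemI a ha) b (hmemI b hb)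
    obtain ⟨K, hKS, hKmax⟩ := S.exists_max_image Finset.card hS0
    rw [hS, Finset.mem_filter] at hKS
    obtain ⟨-, hKclique, hKind⟩ := hKS
    -- step a : maximality
    have hstepa : ∀ v, v ∉ K → ∃ w ∈ K, ¬ G.Adj v w := by
      intro v hv
      by_contra hc
      push_neg at hc
      have hins : insert v K ∈ S := by
        rw [hS, Finset.mem_filter]
        refine ⟨Finset.mem_univ _, ?_, ?_⟩
        · rw [Finset.coe_insert]
          exact hKclique.insert fun b hb _ => hc b hb
        · intro a ha b hb
          exact hKind a (fun h => ha (Finset.mem_insert_of_mem h)) b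
            (fun h => hb (Finset.mem_insert_of_mem h))
      have := hKmax _ hins
      rw [Finset.card_insert_of_notMem hv] at this
      omega
    -- step b : degrees outside K
    have hstepb : ∀ v, v ∉ K → G.degree v ≤ K.card - 1 := by
      intro v hv
      obtain ⟨w, hwK, hnadj⟩ := hstepa v hv
      have hsub : G.neighborFinset v ⊆ K.erase w := by
        intro u hu
        rw [SimpleGraph.mem_neighborFinset] at hu
        have huK : u ∈ K := by
          by_contra huK
          exact hKind v hv u huK hu
        refine Finset.mem_erase.mpr ⟨?_, huK⟩
        rintro rfl
        exact hnadj hu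
      calc G.degree v = (G.neighborFinset v).card := rfl
        _ ≤ (K.erase w).card := Finset.card_le_card hsub
        _ = K.card - 1 := Finset.card_erase_of_mem hwK
    -- step c : degrees inside K
    have hstepc : ∀ v ∈ K, K.card - 1 ≤ G.degree v := by
      intro v hv
      have hsub : K.erase v ⊆ G.neighborFinset v := by
        intro u hu
        rw [SimpleGraph.mem_neighborFinset]
        obtain ⟨hne, huK⟩ := Finset.mem_erase.mp hu
        exact (hKclique huK hv hne).symm
      calc K.card - 1 = (K.erase v).card := (Finset.card_erase_of_mem hv).symm
        _ ≤ (G.neighborFinset v).card := Finset.card_le_card hsub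
        _ = G.degree v := rfl
    -- K nonempty
    have hk1 : 1 ≤ K.card := by
      by_contra h
      have hK0 : K = ∅ := Finset.card_eq_zero.mp (by omega)
      obtain ⟨w, hw, -⟩ := hstepa ⟨0, by omega⟩ (by simp [hK0])
      simp [hK0] at hw
    have hkn : K.card ≤ n := by
      have := Finset.card_le_univ K
      simpa using this
    -- step e : d (k-1) ≥ k-1
    have hde : ∀ hh : K.card - 1 < n, K.card - 1 ≤ d ⟨K.card - 1, hh⟩ := by
      intro hh
      by_contra hc
      push_neg at hc
      have hKsub : K ⊆ Finset.univ.filter (fun i : Fin n => (i : ℕ) < K.card - 1) := by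
        intro v hv
        simp only [Finset.mem_filter, Finset.mem_univ, true_and]
        by_contra hvge
        push_neg at hvge
        have h1 : d v ≤ d ⟨K.card - 1, hh⟩ := hd hvge
        have h2 := hstepc v hv
        rw [hdeg] at h2
        omega
      have := Finset.card_le_card hKsub
      rw [HS_card_filter_lt n (K.card - 1) (by omega)] at this
      omega
    -- step f : d k ≤ k-1
    have hdf : ∀ hh : K.card < n, d ⟨K.card, hh⟩ ≤ K.card - 1 := by
      intro hh
      have hex : ∃ v : Fin n, v ∉ K ∧ (v : ℕ) ≤ K.card := by
        by_contra hc
        push_neg at hc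
        have hsub : Finset.univ.filter (fun i : Fin n => (i : ℕ) < K.card + 1) ⊆ K := by
          intro v hv
          simp only [Finset.mem_filter, Finset.mem_univ, true_and] at hv
          by_contra hvK
          have := hc v hvK
          omega
        have := Finset.card_le_card hsub
        rw [HS_card_filter_lt n (K.card + 1) (by omega)] at this
        omega
      obtain ⟨v, hvK, hvle⟩ := hex
      have h1 : d ⟨K.card, hh⟩ ≤ d v := hd hvle
      have h2 := hstepb v hvK
      rw [hdeg] at h2
      omega
    -- step g : K.card = m
    have hkm : K.card = m := by
      rcases lt_trichotomy K.card m with hlt | heq | hgt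
      · exfalso
        have hkn' : K.card < n := by omega
        have h1 := hdf hkn'
        have hmn : m - 1 < n := by omega
        have h2 : d ⟨m - 1, hmn⟩ ≤ d ⟨K.card, hkn'⟩ := by
          apply hd
          simp only [Fin.mk_le_mk]
          omega
        have h3 : m - 1 ≤ d ⟨m - 1, hmn⟩ := hsplit
        omega
      · exact heq
      · exfalso
        have hh : K.card - 1 < n := by omega
        have h1 := hmax ⟨K.card - 1, hh⟩ (by simp; omega)
        have h2 := hde hh
        simp only at h1
        omega
    -- degree equalities for exchange
    have hAnotK : ∀ v ∈ A, v ∉ K → d v = m - 1 := by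
      intro v hv hvK
      have hvm : (v : ℕ) < m := by
        rw [hA] at hv
        simpa using hv
      have hmn : m - 1 < n := by omega
      have h1 : d ⟨m - 1, hmn⟩ ≤ d v := by
        apply hd
        simp only [Fin.le_def]
        omega
      have h2 := hstepb v hvK
      rw [hdeg, hkm] at h2
      omega
    have hKnotA : ∀ v ∈ K, v ∉ A → d v = m - 1 := by
      intro v hv hvA
      have hvm : m ≤ (v : ℕ) := by
        rw [hA] at hvA
        simp only [Finset.mem_filter, Finset.mem_univ, true_and, not_lt] at hvA
        exact hvA
      have hmn : m < n := lt_of_le_of_lt hvm v.isLt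
      have hkn2 : K.card < n := by omega
      have h1 := hdf hkn2
      have h2 : d v ≤ d ⟨K.card, hkn2⟩ := by
        apply hd
        simp only [Fin.le_def]
        omega
      have h3 := hstepc v hv
      rw [hdeg] at h3
      omega
    -- exchange sums
    have hsumA : ∑ i ∈ A, d i = ∑ v ∈ K, d v := by
      apply HS_sum_exchange d (m - 1) A K (by rw [hAcard, hkm]) hAnotK hKnotA
    have hsumB : ∑ i ∈ Aᶜ, d i = ∑ v ∈ Kᶜ, d v := by
      apply HS_sum_exchange d (m - 1) Aᶜ Kᶜ
      · rw [Finset.card_compl, Finset.card_compl, hAcard, hkm]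
      · intro v hv hvK
        rw [Finset.mem_compl] at hv
        rw [Finset.mem_compl, not_not] at hvK
        exact hKnotA v hvK hv
      · intro v hv hvA
        rw [Finset.mem_compl] at hv
        rw [Finset.mem_compl, not_not] at hvA
        exact hAnotK v hvA hv
    -- counting
    have hKdeg : ∑ v ∈ K, G.degree v =
        m * (m - 1) + ∑ v ∈ K, (G.neighborFinset v ∩ Kᶜ).card := by
      rw [HS_sum_deg G K]
      congr 1
      have hterm : ∀ v ∈ K, (G.neighborFinset v ∩ K).card = m - 1 := by
        intro v hv
        have heq : G.neighborFinset v ∩ K = K.erase v := by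
          ext u
          simp only [Finset.mem_inter, SimpleGraph.mem_neighborFinset, Finset.mem_erase]
          constructor
          · rintro ⟨hadj, huK⟩
            exact ⟨fun h => G.ne_of_adj hadj h.symm, huK⟩
          · rintro ⟨hne, huK⟩
            exact ⟨(hKclique huK hv hne).symm, huK⟩
        rw [heq, Finset.card_erase_of_mem hv, hkm]
      rw [Finset.sum_congr rfl hterm, Finset.sum_const, hkm, smul_eq_mul]
    have hKcdeg : ∑ v ∈ Kᶜ, G.degree v = ∑ v ∈ K, (G.neighborFinset v ∩ Kᶜ).card := by
      rw [HS_sum_deg G Kᶜ, compl_compl]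
      have hzero : ∑ v ∈ Kᶜ, (G.neighborFinset v ∩ Kᶜ).card = 0 := by
        apply Finset.sum_eq_zero
        intro u hu
        rw [Finset.mem_compl] at hu
        rw [Finset.card_eq_zero, Finset.eq_empty_iff_forall_notMem]
        intro x hx
        rw [Finset.mem_inter, SimpleGraph.mem_neighborFinset, Finset.mem_compl] at hx
        exact hKind u hu x hx.2 hx.1
      rw [hzero, zero_add, HS_cross_sum G Kᶜ K]
    have hdd : ∀ s : Finset (Fin n), ∑ v ∈ s, G.degree v = ∑ v ∈ s, d v :=
      fun s => Finset.sum_congr rfl fun v _ => hdeg v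
    rw [hsumA, hsumB, ← hdd, ← hdd, hKdeg, hKcdeg]
  · -- backward direction
    intro hsum
    have hsum' : ∑ i ∈ A, G.degree i = m * (m - 1) + ∑ i ∈ Aᶜ, G.degree i := by
      have hdd : ∀ s : Finset (Fin n), ∑ v ∈ s, G.degree v = ∑ v ∈ s, d v :=
        fun s => Finset.sum_congr rfl fun v _ => hdeg v
      rw [hdd, hdd]
      exact hsum
    rw [HS_sum_deg G A, HS_sum_deg G Aᶜ, compl_compl, HS_cross_sum G Aᶜ A] at hsum'
    have key : ∑ v ∈ A, (G.neighborFinset v ∩ A).card =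
        m * (m - 1) + ∑ v ∈ Aᶜ, (G.neighborFinset v ∩ Aᶜ).card := by omega
    have hb : ∀ v ∈ A, (G.neighborFinset v ∩ A).card ≤ m - 1 := by
      intro v hv
      have hsub : G.neighborFinset v ∩ A ⊆ A.erase v := by
        intro u hu
        rw [Finset.mem_inter, SimpleGraph.mem_neighborFinset] at hu
        exact Finset.mem_erase.mpr ⟨fun h => G.ne_of_adj hu.1 h.symm, hu.2⟩
      calc (G.neighborFinset v ∩ A).card ≤ (A.erase v).card := Finset.card_le_card hsub
        _ = m - 1 := by rw [Finset.card_erase_of_mem hv, hAcard]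
    have hle : ∑ v ∈ A, (G.neighborFinset v ∩ A).card ≤ m * (m - 1) := by
      calc ∑ v ∈ A, (G.neighborFinset v ∩ A).card ≤ A.card • (m - 1) :=
            Finset.sum_le_card_nsmul A _ _ hb
        _ = m * (m - 1) := by rw [hAcard, smul_eq_mul]
    have hzero : ∑ v ∈ Aᶜ, (G.neighborFinset v ∩ Aᶜ).card = 0 := by omega
    have heqsum : ∑ v ∈ A, (G.neighborFinset v ∩ A).card = ∑ v ∈ A, (m - 1) := by
      rw [Finset.sum_const, smul_eq_mul, hAcard]
      omega
    have hall : ∀ v ∈ A, (G.neighborFinset v ∩ A).card = m - 1 :=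
      (Finset.sum_eq_sum_iff_of_le hb).mp heqsum
    have hcliq : ∀ v ∈ A, G.neighborFinset v ∩ A = A.erase v := by
      intro v hv
      apply Finset.eq_of_subset_of_card_le
      · intro u hu
        rw [Finset.mem_inter, SimpleGraph.mem_neighborFinset] at hu
        exact Finset.mem_erase.mpr ⟨fun h => G.ne_of_adj hu.1 h.symm, hu.2⟩
      · rw [hall v hv, Finset.card_erase_of_mem hv, hAcard]
    refine ⟨(↑A : Set (Fin n)), (↑(Aᶜ) : Set (Fin n)), ?_, ?_, ?_, ?_⟩
    · rw [← Finset.coe_union, Finset.union_compl, Finset.coe_univ]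
    · rw [Finset.disjoint_coe]
      exact disjoint_compl_right
    · intro a ha b hb hne
      rw [Finset.mem_coe] at ha hb
      have : b ∈ G.neighborFinset a ∩ A := by
        rw [hcliq a ha]
        exact Finset.mem_erase.mpr ⟨fun h => hne h.symm, hb⟩
      rw [Finset.mem_inter, SimpleGraph.mem_neighborFinset] at this
      exact this.1
    · intro a ha b hb hadj
      rw [Finset.mem_coe] at ha hb
      have h0 : (G.neighborFinset a ∩ Aᶜ).card = 0 := by
        have := Finset.sum_eq_zero_iff.mp hzero a ha
        exact this
      rw [Finset.card_eq_zero, Finset.eq_empty_iff_forall_notMem] at h0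
      exact h0 b (Finset.mem_inter.mpr ⟨(SimpleGraph.mem_neighborFinset G a b).mpr hadj, hb⟩)
end

section
/- A simple graph G is unswitchable if and only if G contains no induced subgraph isomorphic to P_4, C_4, or 2K_2. -/
/-- A graph is unswitchable if no 2-switch is possible in it: there are no four distinct
vertices `u, v, w, x` with `{u,v}, {w,x}` edges and `{u,w}, {v,x}` non-edges. -/
def Unswitchable {V : Type*} (G : SimpleGraph V) : Prop :=
  ¬ ∃ u v w x : V, u ≠ v ∧ u ≠ w ∧ u ≠ x ∧ v ≠ w ∧ v ≠ x ∧ w ≠ x ∧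
      G.Adj u v ∧ G.Adj w x ∧ ¬ G.Adj u w ∧ ¬ G.Adj v x

private lemma mk_emb {V : Type*} (H : SimpleGraph (Fin 4)) (G : SimpleGraph V)
    (a b c d : V) (hab : a ≠ b) (hac : a ≠ c) (had : a ≠ d) (hbc : b ≠ c)
    (hbd : b ≠ d) (hcd : c ≠ d)
    (h : ∀ i j : Fin 4, H.Adj i j ↔ G.Adj (![a,b,c,d] i) (![a,b,c,d] j)) :
    Nonempty (H ↪g G) := by
  refine ⟨⟨⟨![a,b,c,d], ?_⟩, fun {i j} => (h i j).symm⟩⟩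
  intro i j hij
  fin_cases i <;> fin_cases j <;>
    simp_all [hab, hac, had, hbc, hbd, hcd,
      hab.symm, hac.symm, had.symm, hbc.symm, hbd.symm, hcd.symm]

private lemma pg_adj {i j : Fin 4} :
    (SimpleGraph.pathGraph 4).Adj i j ↔ i.val + 1 = j.val ∨ j.val + 1 = i.val :=
  SimpleGraph.pathGraph_adj

/-- A finite simple graph is unswitchable iff it contains no induced subgraph isomorphic
to `P₄`, `C₄`, or `2K₂` (the complement of the 4-cycle).
(Graph embeddings `↪g` are exactly induced-subgraph embeddings.) -/
theorem unswitchable_iff_forbidden {V : Type*} [Fintype V] (G : SimpleGraph V) :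
    Unswitchable G ↔
      (¬ Nonempty (SimpleGraph.pathGraph 4 ↪g G) ∧
       ¬ Nonempty (SimpleGraph.cycleGraph 4 ↪g G) ∧
       ¬ Nonempty ((SimpleGraph.cycleGraph 4)ᶜ ↪g G)) := by
  constructor
  · intro hU
    refine ⟨fun ⟨f⟩ => hU ?_, fun ⟨f⟩ => hU ?_, fun ⟨f⟩ => hU ?_⟩
    · exact ⟨f 0, f 1, f 2, f 3,
        fun h => absurd (f.injective h) (by decide),
        fun h => absurd (f.injective h) (by decide),
        fun h => absurd (f.injective h) (by decide),
        fun h => absurd (f.injective h) (by decide),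
        fun h => absurd (f.injective h) (by decide),
        fun h => absurd (f.injective h) (by decide),
        f.map_adj_iff.mpr (by rw [pg_adj]; decide),
        f.map_adj_iff.mpr (by rw [pg_adj]; decide),
        fun h => absurd (pg_adj.mp (f.map_adj_iff.mp h)) (by decide),
        fun h => absurd (pg_adj.mp (f.map_adj_iff.mp h)) (by decide)⟩
    · exact ⟨f 0, f 1, f 2, f 3,
        fun h => absurd (f.injective h) (by decide),
        fun h => absurd (f.injective h) (by decide),
        fun h => absurd (f.injective h) (by decide),
        fun h => absurd (f.injective h) (by decide),
        fun h => absurd (f.injective h) (by decide),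
        fun h => absurd (f.injective h) (by decide),
        f.map_adj_iff.mpr (by decide),
        f.map_adj_iff.mpr (by decide),
        fun h => absurd (f.map_adj_iff.mp h) (by decide),
        fun h => absurd (f.map_adj_iff.mp h) (by decide)⟩
    · exact ⟨f 0, f 2, f 1, f 3,
        fun h => absurd (f.injective h) (by decide),
        fun h => absurd (f.injective h) (by decide),
        fun h => absurd (f.injective h) (by decide),
        fun h => absurd (f.injective h) (by decide),
        fun h => absurd (f.injective h) (by decide),
        fun h => absurd (f.injective h) (by decide),
        f.map_adj_iff.mpr (by decide),
        f.map_adj_iff.mpr (by decide),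
        fun h => absurd (f.map_adj_iff.mp h) (by decide),
        fun h => absurd (f.map_adj_iff.mp h) (by decide)⟩
  · rintro ⟨hP, hC, hK⟩ ⟨u, v, w, x, huv, huw, hux, hvw, hvx, hwx, auv, awx, nuw, nvx⟩
    have avu := auv.symm
    have axw := awx.symm
    have nwu : ¬ G.Adj w u := fun h => nuw h.symm
    have nxv : ¬ G.Adj x v := fun h => nvx h.symm
    by_cases aux : G.Adj u x <;> by_cases avw : G.Adj v w
    · -- C4 : u-v-w-x-u
      have axu := aux.symm
      have awv := avw.symm
      refine hC (mk_emb _ G u v w x huv huw hux hvw hvx hwx ?_)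
      intro i j
      fin_cases i <;> fin_cases j <;>
        simp [SimpleGraph.cycleGraph_adj, auv, awx, aux, avw, nuw, nvx,
          avu, axw, axu, awv, G.irrefl, nwu, nxv] <;> decide
    · -- P4 : v-u-x-w
      have axu := aux.symm
      have nwv : ¬ G.Adj w v := fun h => avw h.symm
      refine hP (mk_emb _ G v u x w huv.symm hvx hvw hux huw hwx.symm ?_)
      intro i j
      fin_cases i <;> fin_cases j <;>
        simp [pg_adj, auv, awx, aux, avw, nuw, nvx,
          avu, axw, axu, G.irrefl, nwu, nxv, nwv] <;> decide
    · -- P4 : u-v-w-x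
      have awv := avw.symm
      have nxu : ¬ G.Adj x u := fun h => aux h.symm
      refine hP (mk_emb _ G u v w x huv huw hux hvw hvx hwx ?_)
      intro i j
      fin_cases i <;> fin_cases j <;>
        simp [pg_adj, auv, awx, aux, avw, nuw, nvx,
          avu, axw, awv, G.irrefl, nwu, nxv, nxu] <;> decide
    · -- 2K2 : order u w v x, edges 0-2 (uv), 1-3 (wx)
      have nxu : ¬ G.Adj x u := fun h => aux h.symm
      have nwv : ¬ G.Adj w v := fun h => avw h.symm
      refine hK (mk_emb _ G u w v x huw huv hux hvw.symm hwx hvx ?_)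
      intro i j
      fin_cases i <;> fin_cases j <;>
        simp [SimpleGraph.compl_adj, SimpleGraph.cycleGraph_adj, auv, awx, aux, avw,
          nuw, nvx, avu, axw, huv, huw, hux, hvw, hvx, hwx,
          huv.symm, huw.symm, hux.symm, hvw.symm, hvx.symm, hwx.symm,
          nwu, nxv, nxu, nwv] <;> decide
end

section
/- For any positive integer n, let {S_i : 1 ≤ i ≤ 2n} be a family of pairwise disjoint finite (possibly empty) sets with union V, and let G be the graph on vertex set V in which two distinct vertices a ∈ S_i and b ∈ S_j with i ≤ j are adjacent exactly when i + n < j or i > n. Then G is unswitchable. -/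
/-- **Forward direction of Eggleton's theorem.**  For a positive integer `n`, let
`S₁, …, S_{2n}` (indexed here by `Fin (2*n)`, so the 1-based index of `i : Fin (2*n)` is
`i + 1`) be pairwise disjoint sets with union the finite vertex set `V`, and let `G` be
the graph in which distinct vertices `a ∈ Sᵢ`, `b ∈ Sⱼ` with `i ≤ j` are adjacent exactly
when `i + n < j` or `i > n` (in 1-based indices; in the 0-based indices used below this
reads `(i+1) + n < j + 1`, i.e. `i + n < j`, or `i + 1 > n`, i.e. `n ≤ i`).
Then `G` is unswitchable. -/
theorem eggleton_forward {V : Type*} [Fintype V] {n : ℕ} (hn : 0 < n)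
    (S : Fin (2 * n) → Set V)
    (hdisj : Pairwise fun i j => Disjoint (S i) (S j))
    (hunion : ⋃ i, S i = Set.univ)
    (G : SimpleGraph V)
    (hadj : ∀ a b : V, a ≠ b → ∀ i j : Fin (2 * n), a ∈ S i → b ∈ S j → i ≤ j →
      (G.Adj a b ↔ ((i : ℕ) + n < (j : ℕ) ∨ n ≤ (i : ℕ)))) :
    Unswitchable G := by
  rintro ⟨u, v, w, x, huv, huw, hux, hvw, hvx, hwx, Auv, Awx, nAuw, nAvx⟩
  have hidx : ∀ a : V, ∃ i, a ∈ S i := by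
    intro a
    have : a ∈ ⋃ i, S i := hunion ▸ Set.mem_univ a
    exact Set.mem_iUnion.mp this
  obtain ⟨iu, hu⟩ := hidx u
  obtain ⟨iv, hv⟩ := hidx v
  obtain ⟨iw, hw⟩ := hidx w
  obtain ⟨ix, hx⟩ := hidx x
  have key : ∀ a b : V, a ≠ b → ∀ i j : Fin (2 * n), a ∈ S i → b ∈ S j →
      (G.Adj a b ↔ (min (i : ℕ) (j : ℕ) + n < max (i : ℕ) (j : ℕ) ∨ n ≤ min (i : ℕ) (j : ℕ))) := by
    intro a b hab i j ha hb
    rcases le_total i j with h | h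
    · have hij : (i : ℕ) ≤ (j : ℕ) := h
      rw [hadj a b hab i j ha hb h, min_eq_left hij, max_eq_right hij]
    · have hij : (j : ℕ) ≤ (i : ℕ) := h
      rw [G.adj_comm, hadj b a hab.symm j i hb ha h, min_comm, max_comm,
        min_eq_left hij, max_eq_right hij]
  rw [key u v huv iu iv hu hv] at Auv
  rw [key w x hwx iw ix hw hx] at Awx
  rw [key u w huw iu iw hu hw] at nAuw
  rw [key v x hvx iv ix hv hx] at nAvx
  have b1 := iu.isLt
  have b2 := iv.isLt
  have b3 := iw.isLt
  have b4 := ix.isLt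
  omega
end

section
/- Every unswitchable simple graph G arises from the Eggleton construction: there exists a positive integer n and pairwise disjoint finite (possibly empty) sets S_1, …, S_{2n} whose union is the vertex set of G, such that two distinct vertices a ∈ S_i and b ∈ S_j with i ≤ j are adjacent in G exactly when i + n < j or i > n. -/
namespace SimpleGraph

variable {V : Type*} {G : SimpleGraph V}

def VicinalLE (G : SimpleGraph V) (u v : V) : Prop :=
  ∀ w, G.Adj u w → w ≠ v → G.Adj v w

theorem vicinalLE_refl (u : V) : G.VicinalLE u u := fun _ h _ => h

theorem VicinalLE.trans {u v t : V} (huv : G.VicinalLE u v) (hvt : G.VicinalLE v t) :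
    G.VicinalLE u t := by
  intro w huw hwt
  by_cases hwv : w = v
  · subst hwv
    by_cases hut : u = t
    · exact hut ▸ huw
    · exact (huv t (hvt u huw.symm hut).symm (Ne.symm hwt)).symm
  · exact hvt w (huv w huw hwv) hwt

theorem vicinalLE_total (hG : Unswitchable G) (u v : V) : G.VicinalLE u v ∨ G.VicinalLE v u := by
  by_contra! h
  obtain ⟨⟨w, huw, hwv, hvw⟩, ⟨x, hvx, hxu, hux⟩⟩ : (∃ w, G.Adj u w ∧ w ≠ v ∧ ¬G.Adj v w) ∧
      (∃ x, G.Adj v x ∧ x ≠ u ∧ ¬G.Adj u x) := by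
    simpa [VicinalLE] using h
  refine hG ⟨u, w, x, v, huw.ne, hxu.symm, ?_, ?_, hwv, hvx.ne.symm, huw, hvx.symm, hux,
    fun h => hvw h.symm⟩
  · rintro rfl; exact hvw huw
  · rintro rfl; exact hux huw

theorem exists_forall_vicinalLE (hG : Unswitchable G) {s : Finset V} (hs : s.Nonempty) :
    ∃ b ∈ s, ∀ x ∈ s, G.VicinalLE b x := by
  have : IsTrans V (flip G.VicinalLE) := ⟨fun _ _ _ h₁ h₂ => h₂.trans h₁⟩
  have : Nonempty s := hs.to_subtype
  have hdir : Directed (flip G.VicinalLE) (Subtype.val : s → V) := fun x y =>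
    (vicinalLE_total hG x y).elim (fun h => ⟨x, vicinalLE_refl _, h⟩)
      (fun h => ⟨y, h, vicinalLE_refl _⟩)
  obtain ⟨b, hb⟩ := hdir.finset_le Finset.univ
  exact ⟨b, b.2, fun x hx => hb ⟨x, hx⟩ (Finset.mem_univ _)⟩

theorem exists_isolated_or_dominating (hG : Unswitchable G) {s : Finset V} (hs : s.Nonempty) :
    ∃ v ∈ s, (∀ x ∈ s, ¬G.Adj v x) ∨ (∀ x ∈ s, x ≠ v → G.Adj v x) := by
  obtain ⟨b, hbs, hb⟩ := exists_forall_vicinalLE hG hs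
  by_cases h : ∃ w ∈ s, G.Adj b w
  · obtain ⟨w, hws, hbw⟩ := h
    refine ⟨w, hws, Or.inr fun x hxs hxw => ?_⟩
    obtain rfl | hxb := eq_or_ne x b
    · exact hbw.symm
    · exact (hb x hxs w hbw hxw.symm).symm
  · exact ⟨b, hbs, Or.inl fun x hxs hbx => h ⟨x, hxs, hbx⟩⟩

end SimpleGraph

/-- Adjacency of the parts `i` and `j` (counted from `0`) of the Eggleton construction with
`2 * n` parts: the parts below `n` are independent sets and the parts from `n` on form a clique. -/
def EggletonAdj (n i j : ℕ) : Prop :=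
  min i j + n < max i j ∨ n ≤ min i j

theorem eggletonAdj_comm (n i j : ℕ) : EggletonAdj n i j ↔ EggletonAdj n j i := by
  rw [EggletonAdj, EggletonAdj, min_comm, max_comm]

def liftPart (n k : ℕ) : ℕ :=
  if k < n then k else k + 1

theorem liftPart_lt {n k : ℕ} (hk : k < 2 * n) : liftPart n k < 2 * n + 1 := by
  unfold liftPart; split_ifs <;> omega

theorem eggletonAdj_liftPart (n i j : ℕ) :
    EggletonAdj (n + 1) (liftPart n i) (liftPart n j) ↔ EggletonAdj n i j := by
  unfold EggletonAdj liftPart; split_ifs <;> omega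

theorem not_eggletonAdj_liftPart_middle {n k : ℕ} (hk : k < 2 * n) :
    ¬EggletonAdj (n + 1) n (liftPart n k) := by
  unfold EggletonAdj liftPart; split_ifs <;> omega

theorem eggletonAdj_top_liftPart (n k : ℕ) :
    EggletonAdj (n + 1) (2 * n + 1) (liftPart n k) := by
  unfold EggletonAdj liftPart; split_ifs <;> omega

section

variable {V : Type*}

structure IsEggletonLabelling (G : SimpleGraph V) (s : Finset V) (n : ℕ) (f : V → ℕ) : Prop where
  lt_two_mul : ∀ a ∈ s, f a < 2 * n
  adj_iff : ∀ a ∈ s, ∀ b ∈ s, a ≠ b → (G.Adj a b ↔ EggletonAdj n (f a) (f b))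

theorem IsEggletonLabelling.update_insert [DecidableEq V] {G : SimpleGraph V} {s : Finset V}
    {n : ℕ} {f : V → ℕ} (h : IsEggletonLabelling G s n f) {v : V} {m : ℕ} (hm : m < 2 * (n + 1))
    (hv : ∀ a ∈ s, a ≠ v → (G.Adj v a ↔ EggletonAdj (n + 1) m (liftPart n (f a)))) :
    IsEggletonLabelling G (insert v s) (n + 1) (Function.update (liftPart n ∘ f) v m) := by
  have old : ∀ a ∈ insert v s, a ≠ v → a ∈ s := fun a ha hav =>
    (Finset.mem_insert.1 ha).resolve_left hav
  constructor
  · intro a ha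
    obtain rfl | hav := eq_or_ne a v
    · simpa using hm
    · simpa [hav] using (liftPart_lt (h.lt_two_mul a (old a ha hav))).trans (by omega)
  · intro a ha b hb hab
    obtain rfl | hav := eq_or_ne a v
    · simpa [hab.symm] using hv b (old b hb hab.symm) hab.symm
    obtain rfl | hbv := eq_or_ne b v
    · simpa [hab, G.adj_comm, eggletonAdj_comm] using hv a (old a ha hab) hab
    simpa [hav, hbv, eggletonAdj_liftPart] using h.adj_iff a (old a ha hav) b (old b hb hbv) hab

theorem exists_isEggletonLabelling {G : SimpleGraph V} (hG : Unswitchable G) (s : Finset V) :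
    ∃ n, 0 < n ∧ ∃ f, IsEggletonLabelling G s n f := by
  classical
  induction s using Finset.strongInduction with
  | H s ih =>
    obtain rfl | hs := s.eq_empty_or_nonempty
    · exact ⟨1, one_pos, 0, by simp, by simp⟩
    obtain ⟨v, hvs, hv⟩ := SimpleGraph.exists_isolated_or_dominating hG hs
    obtain ⟨n, -, f, hf⟩ := ih (s.erase v) (Finset.erase_ssubset hvs)
    rw [← Finset.insert_erase hvs]
    rcases hv with isolated | dominating
    · refine ⟨n + 1, n.succ_pos, _, hf.update_insert (m := n) (by omega) fun a ha _ => ?_⟩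
      exact iff_of_false (isolated a (Finset.mem_of_mem_erase ha))
        (not_eggletonAdj_liftPart_middle (hf.lt_two_mul a ha))
    · refine ⟨n + 1, n.succ_pos, _, hf.update_insert (m := 2 * n + 1) (by omega)
        fun a ha hav => ?_⟩
      exact iff_of_true (dominating a (Finset.mem_of_mem_erase ha) hav)
        (eggletonAdj_top_liftPart n (f a))

end

/-- **Converse direction of Eggleton's theorem.**  Every unswitchable finite simple graph
arises from the Eggleton construction: there are a positive integer `n` and pairwise
disjoint sets `S₁, …, S_{2n}` (indexed here by `Fin (2*n)`; the 1-based index of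
`i : Fin (2*n)` is `i + 1`) with union the vertex set, such that distinct vertices
`a ∈ Sᵢ`, `b ∈ Sⱼ` with `i ≤ j` are adjacent exactly when `i + n < j` or `i > n`
(in 1-based indices; in 0-based indices: `i + n < j` or `n ≤ i`). -/
theorem eggleton_converse {V : Type*} [Fintype V] (G : SimpleGraph V)
    (hG : Unswitchable G) :
    ∃ n : ℕ, 0 < n ∧ ∃ S : Fin (2 * n) → Set V,
      (Pairwise fun i j => Disjoint (S i) (S j)) ∧
      (⋃ i, S i = Set.univ) ∧
      (∀ a b : V, a ≠ b → ∀ i j : Fin (2 * n), a ∈ S i → b ∈ S j → i ≤ j →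
        (G.Adj a b ↔ ((i : ℕ) + n < (j : ℕ) ∨ n ≤ (i : ℕ)))) := by
  obtain ⟨n, hn, f, hf⟩ := exists_isEggletonLabelling hG Finset.univ
  refine ⟨n, hn, fun i => {a | f a = i}, fun i j hij => ?_, ?_, ?_⟩
  · exact Set.disjoint_left.2 fun a hi hj => hij (Fin.ext (hi.symm.trans hj))
  · exact Set.eq_univ_of_forall fun a =>
      Set.mem_iUnion.2 ⟨⟨f a, hf.lt_two_mul a (Finset.mem_univ a)⟩, rfl⟩
  · intro a b hab i j (hi : f a = i) (hj : f b = j) (hij : (i : ℕ) ≤ j)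
    rw [hf.adj_iff a (Finset.mem_univ a) b (Finset.mem_univ b) hab, EggletonAdj, hi, hj,
      min_eq_left hij, max_eq_right hij]
end

section
/- For any positive integer n, let {S_i : 1 ≤ i ≤ 2n} be a family of pairwise disjoint finite sets with union V, and let G be the graph on V in which distinct vertices a ∈ S_i, b ∈ S_j with i ≤ j are adjacent exactly when i + n < j or i > n. Then G contains no induced subgraph isomorphic to C_4 (the 4-cycle). -/
/-- **Lemma for the forward direction of Eggleton's theorem.**  For a positive integer
`n`, let `S₁, …, S_{2n}` (indexed here by `Fin (2*n)`; the 1-based index of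
`i : Fin (2*n)` is `i + 1`) be pairwise disjoint sets with union the finite vertex set
`V`, and let `G` be the graph in which distinct vertices `a ∈ Sᵢ`, `b ∈ Sⱼ` with `i ≤ j`
are adjacent exactly when `i + n < j` or `i > n` (in 1-based indices; in 0-based indices:
`i + n < j` or `n ≤ i`).  Then `G` contains no induced subgraph isomorphic to the
4-cycle `C₄`.  (Graph embeddings `↪g` are exactly induced-subgraph embeddings.) -/
theorem eggleton_no_induced_C4 {V : Type*} [Fintype V] {n : ℕ} (hn : 0 < n)
    (S : Fin (2 * n) → Set V)
    (hdisj : Pairwise fun i j => Disjoint (S i) (S j))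
    (hunion : ⋃ i, S i = Set.univ)
    (G : SimpleGraph V)
    (hadj : ∀ a b : V, a ≠ b → ∀ i j : Fin (2 * n), a ∈ S i → b ∈ S j → i ≤ j →
      (G.Adj a b ↔ ((i : ℕ) + n < (j : ℕ) ∨ n ≤ (i : ℕ)))) :
    ¬ Nonempty (SimpleGraph.cycleGraph 4 ↪g G) := by
  rintro ⟨f⟩
  have hidx : ∀ v : V, ∃ i, v ∈ S i := by
    intro v
    have : v ∈ ⋃ i, S i := by rw [hunion]; trivial
    simpa using this
  choose idx hmem using hidx
  -- symmetric adjacency characterization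
  have key : ∀ a b : V, a ≠ b →
      (G.Adj a b ↔ ((idx a : ℕ) + n < idx b ∨ (idx b : ℕ) + n < idx a ∨
        (n ≤ (idx a : ℕ) ∧ n ≤ (idx b : ℕ)))) := by
    intro a b hab
    rcases le_total (idx a) (idx b) with h | h
    · have := hadj a b hab _ _ (hmem a) (hmem b) h
      have h' : (idx a : ℕ) ≤ (idx b : ℕ) := h
      rw [this]
      constructor
      · rintro (h1 | h1)
        · exact Or.inl h1
        · exact Or.inr (Or.inr ⟨h1, le_trans h1 h'⟩)
      · rintro (h1 | h1 | ⟨h1, h2⟩)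
        · exact Or.inl h1
        · omega
        · exact Or.inr h1
    · have := hadj b a hab.symm _ _ (hmem b) (hmem a) h
      have h' : (idx b : ℕ) ≤ (idx a : ℕ) := h
      rw [G.adj_comm, this]
      constructor
      · rintro (h1 | h1)
        · exact Or.inr (Or.inl h1)
        · exact Or.inr (Or.inr ⟨le_trans h1 h', h1⟩)
      · rintro (h1 | h1 | ⟨h1, h2⟩)
        · omega
        · exact Or.inl h1
        · exact Or.inr h2
  -- vertices of the cycle
  set a := f 0 with ha
  set b := f 1 with hb
  set c := f 2 with hc
  set d := f 3 with hd
  have hne : ∀ u v : Fin 4, u ≠ v → f u ≠ f v := fun u v h hh => h (f.injective hh)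
  have cadj : ∀ u v : Fin 4, (SimpleGraph.cycleGraph 4).Adj u v → G.Adj (f u) (f v) := by
    intro u v h; exact f.map_adj_iff.mpr h
  have cnadj : ∀ u v : Fin 4, ¬ (SimpleGraph.cycleGraph 4).Adj u v → ¬ G.Adj (f u) (f v) := by
    intro u v h hh; exact h (f.map_adj_iff.mp hh)
  have e01 : G.Adj a b := cadj 0 1 (by rw [SimpleGraph.cycleGraph_adj]; decide)
  have e12 : G.Adj b c := cadj 1 2 (by rw [SimpleGraph.cycleGraph_adj]; decide)
  have e23 : G.Adj c d := cadj 2 3 (by rw [SimpleGraph.cycleGraph_adj]; decide)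
  have e30 : G.Adj d a := cadj 3 0 (by rw [SimpleGraph.cycleGraph_adj]; decide)
  have ne02 : ¬ G.Adj a c := cnadj 0 2 (by rw [SimpleGraph.cycleGraph_adj]; decide)
  have ne13 : ¬ G.Adj b d := cnadj 1 3 (by rw [SimpleGraph.cycleGraph_adj]; decide)
  have hac : a ≠ c := hne 0 2 (by decide)
  have hbd : b ≠ d := hne 1 3 (by decide)
  rw [key a b e01.ne] at e01
  rw [key b c e12.ne] at e12
  rw [key c d e23.ne] at e23
  rw [key d a e30.ne] at e30
  rw [key a c hac] at ne02
  rw [key b d hbd] at ne13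
  omega
end

section
/- Every unswitchable simple graph is a split graph. -/
/-- Every unswitchable finite simple graph is a split graph. -/
theorem unswitchable_isSplit {V : Type*} [Fintype V] (G : SimpleGraph V)
    (hG : Unswitchable G) : IsSplit G := by
  classical
  -- choose a maximum clique
  obtain ⟨s, hs, hmax⟩ :
      ∃ s : Finset V, G.IsClique ↑s ∧ ∀ t : Finset V, G.IsClique ↑t → t.card ≤ s.card := by
    obtain ⟨s, hs, hmax⟩ :=
      Finset.exists_max_image (Finset.univ.filter fun t : Finset V => G.IsClique ↑t)
        Finset.card ⟨∅, by simp⟩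
    simp only [Finset.mem_filter, Finset.mem_univ, true_and] at hs hmax
    exact ⟨s, hs, fun t ht => hmax t (by simpa using ht)⟩
  -- every vertex outside s has a non-neighbor in s
  have key : ∀ a : V, a ∉ s → ∃ k ∈ s, ¬ G.Adj a k := by
    intro a ha
    by_contra h
    push_neg at h
    have hcl : G.IsClique ↑(insert a s) := by
      rw [Finset.coe_insert]
      exact hs.insert fun b hb hab => h b hb
    have := hmax _ hcl
    rw [Finset.card_insert_of_notMem ha] at this
    omega
  refine ⟨↑s, (↑s : Set V)ᶜ, by simp, disjoint_compl_right, hs, ?_⟩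
  intro a ha b hb hab
  simp only [Set.mem_compl_iff, Finset.mem_coe] at ha hb
  have hne : a ≠ b := G.ne_of_adj hab
  obtain ⟨ka, hka, hnka⟩ := key a ha
  obtain ⟨kb, hkb, hnkb⟩ := key b hb
  -- if we can find distinct non-neighbors, we get a 2-switch
  by_cases hpq : ∃ p ∈ s, ∃ q ∈ s, p ≠ q ∧ ¬ G.Adj a p ∧ ¬ G.Adj b q
  · obtain ⟨p, hp, q, hq, hpq', hnap, hnbq⟩ := hpq
    exact hG ⟨a, b, p, q, hne, fun h => ha (h ▸ hp), fun h => ha (h ▸ hq),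
      fun h => hb (h ▸ hp), fun h => hb (h ▸ hq), hpq', hab,
      hs hp hq hpq', hnap, hnbq⟩
  · push_neg at hpq
    -- then ka = kb =: k and a, b are adjacent to everything in s \ {k}
    have hk : ka = kb := by
      by_contra h
      exact hnkb (hpq ka hka kb hkb h hnka)
    subst hk
    have haall : ∀ p ∈ s, p ≠ ka → G.Adj a p := by
      intro p hp hpk
      by_contra h
      exact hnkb (hpq p hp ka hka hpk h)
    have hball : ∀ q ∈ s, q ≠ ka → G.Adj b q := by
      intro q hq hqk
      by_contra h
      exact h (hpq ka hka q hq (Ne.symm hqk) hnka)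
    -- build a bigger clique
    set t : Finset V := insert a (insert b (s.erase ka)) with ht
    have hbc : G.IsClique ↑(insert b (s.erase ka)) := by
      rw [Finset.coe_insert]
      refine (hs.subset (by simp [Finset.erase_subset])).insert ?_
      intro q hq hbq
      simp only [Finset.coe_erase, Set.mem_diff, Finset.mem_coe, Set.mem_singleton_iff] at hq
      exact hball q hq.1 hq.2
    have hcl : G.IsClique ↑t := by
      rw [ht, Finset.coe_insert]
      refine hbc.insert ?_
      intro p hp hap
      simp only [Finset.coe_insert, Set.mem_insert_iff, Finset.coe_erase, Set.mem_diff,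
        Finset.mem_coe, Set.mem_singleton_iff] at hp
      rcases hp with rfl | ⟨hp, hpk⟩
      · exact hab
      · exact haall p hp hpk
    have hbnot : b ∉ s.erase ka := fun h => hb (Finset.mem_of_mem_erase h)
    have hanot : a ∉ insert b (s.erase ka) := by
      simp only [Finset.mem_insert]
      rintro (rfl | h)
      · exact hne rfl
      · exact ha (Finset.mem_of_mem_erase h)
    have hcard : t.card = s.card + 1 := by
      rw [ht, Finset.card_insert_of_notMem hanot, Finset.card_insert_of_notMem hbnot,
        Finset.card_erase_of_mem hka]
      have : 1 ≤ s.card := Finset.card_pos.mpr ⟨ka, hka⟩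
      omega
    have := hmax t hcl
    omega
end

section
/- Let G be a split graph with vertex set partitioned into a clique K and an independent set I. For a vertex w ∈ K, let S_w denote the set of neighbors of w lying in I. Then G contains an induced subgraph isomorphic to P_4 if and only if there exist distinct vertices u, v ∈ K such that both set differences S_u \ S_v and S_v \ S_u are nonempty. -/
/-!
In a split graph an induced path `a - b - c - d` has its inner vertices in the clique `K` and its
ends in the independent set `I`: an inner vertex in `I` would have two nonadjacent neighbours,
both in `K`; and an end in `K` would be adjacent to the far inner vertex. So the induced `P₄`s are
exactly the paths `a - u - v - b` with `u, v ∈ K` and `a ∈ S_u \ S_v`, `b ∈ S_v \ S_u`.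
-/

open SimpleGraph

namespace SimpleGraph

variable {V : Type*} {G : SimpleGraph V}

lemma injective_of_adj_iff {W : Type*} {H : SimpleGraph W} {f : W → V}
    (hf : ∀ i j, G.Adj (f i) (f j) ↔ H.Adj i j) (hH : Function.Injective H.neighborSet) :
    Function.Injective f := by
  intro i j hij
  apply hH
  ext k
  simp only [mem_neighborSet, ← hf, hij]

lemma injective_neighborSet_pathGraph_four : Function.Injective (pathGraph 4).neighborSet := by
  intro i j hij
  have key : ∀ k, (pathGraph 4).Adj i k ↔ (pathGraph 4).Adj j k := fun k => Set.ext_iff.mp hij k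
  simp only [pathGraph_adj] at key
  clear hij
  revert i j
  decide

/-- Distinctness of the four vertices is forced by the adjacency pattern. -/
theorem nonempty_pathGraph_four_embedding_iff :
    Nonempty (pathGraph 4 ↪g G) ↔ ∃ a b c d, G.Adj a b ∧ G.Adj b c ∧ G.Adj c d ∧
      ¬G.Adj a c ∧ ¬G.Adj a d ∧ ¬G.Adj b d := by
  constructor
  · rintro ⟨f⟩
    have hf : ∀ i j, G.Adj (f i) (f j) ↔ i.val + 1 = j.val ∨ j.val + 1 = i.val := fun i j =>
      f.map_adj_iff.trans pathGraph_adj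
    exact ⟨f 0, f 1, f 2, f 3, (hf 0 1).2 (by decide), (hf 1 2).2 (by decide),
      (hf 2 3).2 (by decide), mt (hf 0 2).1 (by decide), mt (hf 0 3).1 (by decide),
      mt (hf 1 3).1 (by decide)⟩
  · rintro ⟨a, b, c, d, hab, hbc, hcd, hac, had, hbd⟩
    have hf : ∀ i j, G.Adj (![a, b, c, d] i) (![a, b, c, d] j) ↔ (pathGraph 4).Adj i j := by
      intro i j
      fin_cases i <;> fin_cases j <;>
        simp [pathGraph_adj, hab, hbc, hcd, hac, had, hbd, hab.symm, hbc.symm, hcd.symm,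
          G.adj_comm c a, G.adj_comm d a, G.adj_comm d b]
    exact ⟨⟨⟨_, injective_of_adj_iff hf injective_neighborSet_pathGraph_four⟩, hf _ _⟩⟩

section Split

variable {K I : Set V}

lemma mem_or_mem_of_union_eq_univ (hcover : K ∪ I = Set.univ) (x : V) : x ∈ K ∨ x ∈ I :=
  Set.mem_union x K I |>.1 (hcover ▸ Set.mem_univ x)

lemma mem_clique_of_adj_of_mem_indep (hcover : K ∪ I = Set.univ)
    (hI : ∀ a ∈ I, ∀ b ∈ I, ¬ G.Adj a b) {x y : V} (hxy : G.Adj x y) (hx : x ∈ I) : y ∈ K :=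
  (mem_or_mem_of_union_eq_univ hcover y).resolve_right (hI x hx y · hxy)

lemma mem_indep_of_not_adj_of_mem_clique (hcover : K ∪ I = Set.univ) (hK : G.IsClique K)
    {x y : V} (hne : x ≠ y) (hxy : ¬G.Adj x y) (hx : x ∈ K) : y ∈ I :=
  (mem_or_mem_of_union_eq_univ hcover y).resolve_left (hxy <| hK hx · hne)

lemma mem_clique_of_induced_path_three (hcover : K ∪ I = Set.univ) (hK : G.IsClique K)
    (hI : ∀ a ∈ I, ∀ b ∈ I, ¬ G.Adj a b) {a b c : V} (hab : G.Adj a b) (hbc : G.Adj b c)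
    (hne : a ≠ c) (hac : ¬G.Adj a c) : b ∈ K :=
  (mem_or_mem_of_union_eq_univ hcover b).resolve_right fun hb =>
    hac <| hK (mem_clique_of_adj_of_mem_indep hcover hI hab.symm hb)
      (mem_clique_of_adj_of_mem_indep hcover hI hbc hb) hne

lemma mem_of_induced_path_four (hcover : K ∪ I = Set.univ) (hK : G.IsClique K)
    (hI : ∀ a ∈ I, ∀ b ∈ I, ¬ G.Adj a b) {a b c d : V} (hab : G.Adj a b) (hbc : G.Adj b c)
    (hcd : G.Adj c d) (hac : ¬G.Adj a c) (had : ¬G.Adj a d) (hbd : ¬G.Adj b d) :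
    a ∈ I ∧ b ∈ K ∧ c ∈ K ∧ d ∈ I := by
  have hac' : a ≠ c := by rintro rfl; exact had hcd
  have hbd' : b ≠ d := by rintro rfl; exact had hab
  have hbK : b ∈ K := mem_clique_of_induced_path_three hcover hK hI hab hbc hac' hac
  have hcK : c ∈ K := mem_clique_of_induced_path_three hcover hK hI hbc hcd hbd' hbd
  exact ⟨mem_indep_of_not_adj_of_mem_clique hcover hK hac'.symm (hac ·.symm) hcK, hbK, hcK,
    mem_indep_of_not_adj_of_mem_clique hcover hK hbd' hbd hbK⟩

end Split

end SimpleGraph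

theorem induced_P4_iff_clique_pair_general {V : Type*} (G : SimpleGraph V)
    (K I : Set V) (hcover : K ∪ I = Set.univ)
    (hK : G.IsClique K) (hI : ∀ a ∈ I, ∀ b ∈ I, ¬ G.Adj a b) :
    Nonempty (SimpleGraph.pathGraph 4 ↪g G) ↔
      ∃ u ∈ K, ∃ v ∈ K, u ≠ v ∧
        ({z ∈ I | G.Adj u z} \ {z ∈ I | G.Adj v z}).Nonempty ∧
        ({z ∈ I | G.Adj v z} \ {z ∈ I | G.Adj u z}).Nonempty := by
  rw [nonempty_pathGraph_four_embedding_iff]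
  constructor
  · rintro ⟨a, u, v, b, hau, huv, hvb, hav, hab, hub⟩
    obtain ⟨haI, hu, hv, hbI⟩ := mem_of_induced_path_four hcover hK hI hau huv hvb hav hab hub
    exact ⟨u, hu, v, hv, huv.ne, ⟨a, ⟨haI, hau.symm⟩, fun h => hav h.2.symm⟩,
      ⟨b, ⟨hbI, hvb⟩, fun h => hub h.2⟩⟩
  · rintro ⟨u, hu, v, hv, huv, ⟨a, ⟨haI, hua⟩, hva⟩, ⟨b, ⟨hbI, hvb⟩, hub⟩⟩
    exact ⟨a, u, v, b, hua.symm, hK hu hv huv, hvb, fun h => hva ⟨haI, h.symm⟩,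
      hI a haI b hbI, fun h => hub ⟨hbI, h⟩⟩

/-- **Correctness criterion of the unswitchable-graph recognition algorithm.**
Let `G` be a split graph with vertex set partitioned into a clique `K` and an
independent set `I`, and for `w ∈ K` let `S_w = {z ∈ I | G.Adj w z}` be the set of
neighbors of `w` lying in `I`.  Then `G` has an induced subgraph isomorphic to `P₄`
iff there are distinct `u, v ∈ K` with both `S_u \ S_v` and `S_v \ S_u` nonempty.
(Graph embeddings `↪g` are exactly induced-subgraph embeddings.) -/
theorem induced_P4_iff_clique_pair {V : Type*} [Fintype V] (G : SimpleGraph V)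
    (K I : Set V) (hcover : K ∪ I = Set.univ) (hdisj : Disjoint K I)
    (hK : G.IsClique K) (hI : ∀ a ∈ I, ∀ b ∈ I, ¬ G.Adj a b) :
    Nonempty (SimpleGraph.pathGraph 4 ↪g G) ↔
      ∃ u ∈ K, ∃ v ∈ K, u ≠ v ∧
        ({z ∈ I | G.Adj u z} \ {z ∈ I | G.Adj v z}).Nonempty ∧
        ({z ∈ I | G.Adj v z} \ {z ∈ I | G.Adj u z}).Nonempty :=
  induced_P4_iff_clique_pair_general G K I hcover hK hI
end

section
/- Let G be an unswitchable simple graph on a finite vertex set V. Then G is the unique realization of its degree sequence on V: if H is any simple graph on V with d_H(v) = d_G(v) for all v ∈ V, then H = G. -/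
open scoped Classical

/-!
In an unswitchable graph neighbourhoods are nested: for `u ≠ v`, one of `N(u) \ {v}` and
`N(v) \ {u}` contains the other, since witnesses of both non-inclusions would give a 2-switch.
So a vertex of maximum degree is adjacent to every neighbour of each of its non-neighbours `x`,
which makes `x` isolated: every nonempty unswitchable graph has an isolated or a dominating
vertex. Being isolated (dominating) is read off the degree, and unswitchability passes to
complements and induced subgraphs, so induction on the number of vertices removes that vertex,
working in `Gᶜ` in the dominating case.
-/

open Finset SimpleGraph

namespace Unswitchable

variable {V : Type*} {G : SimpleGraph V}

theorem compl (hG : Unswitchable G) : Unswitchable Gᶜ := by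
  rintro ⟨u, v, w, x, huv, huw, hux, hvw, hvx, hwx, huv', hwx', huw', hvx'⟩
  simp only [compl_adj, not_and, not_not] at huv' hwx' huw' hvx'
  exact hG ⟨u, w, v, x, huw, huv, hux, hvw.symm, hwx, hvx,
    huw' huw, hvx' hvx, huv'.2, hwx'.2⟩

theorem comap {W : Type*} (hG : Unswitchable G) {f : W → V} (hf : Function.Injective f) :
    Unswitchable (G.comap f) := by
  rintro ⟨u, v, w, x, huv, huw, hux, hvw, hvx, hwx, h⟩
  exact hG ⟨f u, f v, f w, f x, hf.ne huv, hf.ne huw, hf.ne hux, hf.ne hvw, hf.ne hvx,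
    hf.ne hwx, h⟩

theorem induce (hG : Unswitchable G) (s : Set V) : Unswitchable (G.induce s) :=
  hG.comap Subtype.val_injective

theorem neighborSet_sdiff_subset_or (hG : Unswitchable G) {u v : V} (huv : u ≠ v) :
    G.neighborSet u \ {v} ⊆ G.neighborSet v ∨ G.neighborSet v \ {u} ⊆ G.neighborSet u := by
  by_contra h
  simp only [not_or, Set.not_subset] at h
  obtain ⟨⟨x, ⟨hux, hxv⟩, hvx⟩, ⟨y, ⟨hvy, hyu⟩, huy⟩⟩ := h
  have hxy : x ≠ y := by rintro rfl; exact hvx hvy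
  exact hG ⟨x, u, v, y, hux.ne', hxv, hxy, huv, Ne.symm hyu, hvy.ne,
    hux.symm, hvy, fun h => hvx h.symm, huy⟩

theorem neighborSet_sdiff_subset_of_degree_le [Fintype V] (hG : Unswitchable G) {u v : V}
    (huv : u ≠ v) (hdeg : G.degree u ≤ G.degree v) :
    G.neighborSet u \ {v} ⊆ G.neighborSet v := by
  intro z ⟨huz, hzv⟩
  refine (hG.neighborSet_sdiff_subset_or huv).elim (· ⟨huz, hzv⟩) fun hvu => ?_
  -- `N(v) \ {u} ⊆ N(u) \ {v}`, and the degree bound makes them equinumerous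
  have hsub : (G.neighborFinset v).erase u ⊆ (G.neighborFinset u).erase v := by
    intro w hw
    simp only [mem_erase, mem_neighborFinset] at hw ⊢
    exact ⟨hw.2.ne', hvu ⟨hw.2, hw.1⟩⟩
  have hcard : #((G.neighborFinset u).erase v) ≤ #((G.neighborFinset v).erase u) := by
    simp only [card_erase_eq_ite, mem_neighborFinset, card_neighborFinset_eq_degree,
      G.adj_comm v u]
    split_ifs <;> omega
  have hz : z ∈ (G.neighborFinset u).erase v := by simpa [mem_erase] using ⟨hzv, huz⟩
  rw [← eq_of_subset_of_card_le hsub hcard] at hz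
  exact (mem_neighborFinset _ _ _).mp (mem_of_mem_erase hz)

theorem exists_isIsolated_or_isIsolated_compl [Fintype V] [Nonempty V]
    (hG : Unswitchable G) : ∃ v, G.IsIsolated v ∨ Gᶜ.IsIsolated v := by
  obtain ⟨v, hv⟩ := G.exists_maximal_degree_vertex
  by_cases hdom : Gᶜ.IsIsolated v
  · exact ⟨v, Or.inr hdom⟩
  obtain ⟨x, hvx⟩ : ∃ x, Gᶜ.Adj v x := by simpa [IsIsolated] using hdom
  rw [compl_adj] at hvx
  refine ⟨x, Or.inl fun y hxy => hvx.2 ?_⟩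
  have hyv : y ≠ v := by rintro rfl; exact hvx.2 hxy.symm
  exact hG.neighborSet_sdiff_subset_of_degree_le hyv (hv ▸ G.degree_le_maxDegree y)
    ⟨hxy.symm, hvx.1.symm⟩

end Unswitchable

namespace SimpleGraph

variable {V : Type*} {G H : SimpleGraph V}

theorem degree_induce_compl_singleton_of_isIsolated [Fintype V] {v : V} (hv : G.IsIsolated v)
    (u : ({v}ᶜ : Set V)) [Fintype ((G.induce {v}ᶜ).neighborSet u)] [Fintype (G.neighborSet u)] :
    (G.induce {v}ᶜ).degree u = G.degree u := by
  convert degree_induce_of_neighborSet_subset (G := G) (s := {v}ᶜ) (v := u)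
    fun w hw (hwv : w = v) => hv u (hwv ▸ hw).symm

theorem eq_of_isIsolated_of_induce_eq {v : V} (hH : H.IsIsolated v) (hG : G.IsIsolated v)
    (h : H.induce {v}ᶜ = G.induce {v}ᶜ) : H = G := by
  ext a b
  by_cases hav : a = v
  · subst hav; exact iff_of_false (hH b) (hG b)
  by_cases hbv : b = v
  · subst hbv; exact iff_of_false (fun h => hH a h.symm) (fun h => hG a h.symm)
  simpa using congrArg (fun K : SimpleGraph ({v}ᶜ : Set V) => K.Adj ⟨a, hav⟩ ⟨b, hbv⟩) h

end SimpleGraph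

/-- An unswitchable finite simple graph is the unique realization of its degree sequence
on its vertex set: any graph on the same vertex set with the same degree at every vertex
is equal to it. -/
theorem unswitchable_unique_realization {V : Type*} [Fintype V]
    (G : SimpleGraph V) (hG : Unswitchable G)
    (H : SimpleGraph V) (hdeg : ∀ v : V, H.degree v = G.degree v) : H = G := by
  induction hn : Fintype.card V using Nat.strong_induction_on generalizing V with
  | _ n ih =>
  rcases isEmpty_or_nonempty V with hV | hV
  · ext u; exact isEmptyElim u
  obtain ⟨v, hv⟩ := hG.exists_isIsolated_or_isIsolated_compl
  wlog hGv : G.IsIsolated v generalizing G H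
  · exact compl_injective <| this Gᶜ hG.compl Hᶜ
      (fun u => by rw [degree_compl, degree_compl, hdeg])
      (Or.inl (hv.resolve_left hGv)) (hv.resolve_left hGv)
  have hHv : H.IsIsolated v := (H.degree_eq_zero v).mp ((hdeg v).trans hGv.degree_eq_zero)
  have hcard : Fintype.card ({v}ᶜ : Set V) < n :=
    hn ▸ Fintype.card_subtype_lt (x := v) (by simp)
  refine eq_of_isIsolated_of_induce_eq hHv hGv <| ih _ hcard _ (hG.induce _) _ (fun u => ?_) rfl
  rw [degree_induce_compl_singleton_of_isIsolated hHv,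
    degree_induce_compl_singleton_of_isIsolated hGv, hdeg]
end
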